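/- arXiv:2409.08422 — 4 statements merged into one kernel-verified Lean document; each statement's English description precedes it below -/
import Mathlib

section
/- Define matrices $F_s, G_s \in \underline{\mathbb{R}}^{n \times p}$ by $[F_s]_{i,j} = [f]_j(z_i)$ and $[G_s]_{i,j} = \mathbf{B}_s[f]_j(z_i)$, where $\mathbf{B}_s$ is the empirical Bellman operator with discount $\gamma \in (0,1)$. If $\bar\theta \in \mathbb{R}^p$ satisfies the max-plus equation $F_s \boxtimes \theta = G_s \boxtimes (\gamma\theta)$, then the max-plus linear function $Q_{\bar\theta}(z) = \max_{j \in [1:p]}([f]_j(z) + [\bar\theta]_j)$ satisfies the empirical Bellman equation $Q_{\bar\theta}(z_i) = r_i + \gamma \max_{u^+} Q_{\bar\theta}(x_i^+, u^+)$ for all $i \in [1:n]$. -/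
open Finset

/-- Max-plus matrix-vector product over `ℝ ∪ {-∞}` (modeled as `WithBot ℝ`). -/
def mpMulVec {m n : ℕ} (A : Fin m → Fin n → WithBot ℝ) (v : Fin n → WithBot ℝ) :
    Fin m → WithBot ℝ :=
  fun i => univ.sup fun j => A i j + v j

/-- Empirical Bellman operator applied to `g : Z → ℝ ∪ {-∞}` at sample `i`. -/
def empBellman {X U : Type*} [Fintype U] {N : ℕ} (r : Fin N → ℝ) (γ : ℝ)
    (xp : Fin N → X) (g : X × U → WithBot ℝ) : Fin N → WithBot ℝ :=
  fun i => (r i : WithBot ℝ) + (univ.sup fun u => g (xp i, u)).map (γ * ·)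

/-!
The empirical Bellman operator is max-plus linear, the scalar `γ` acting on the coefficients:
`𝐁ₛ (max_j (f_j + θ_j)) = max_j (𝐁ₛ f_j + γ θ_j)`. Indeed, for `γ ≥ 0` the map `x ↦ γ x` is
monotone and hence commutes with finite maxima, as does adding a constant, and the maxima over
`u⁺` and over `j` can be swapped. Hence `Q_θ̄(zᵢ) = [Fₛ ⊠ θ̄]ᵢ = [Gₛ ⊠ γθ̄]ᵢ = 𝐁ₛ Q_θ̄(zᵢ)`.
-/

namespace WithBot

variable {ι α β : Type*}

theorem finset_sup_add [AddCommMonoid α] [LinearOrder α] [IsOrderedAddMonoid α]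
    (s : Finset ι) (g : ι → WithBot α) (c : WithBot α) :
    s.sup g + c = s.sup fun j => g j + c :=
  apply_sup_eq_sup_comp_of_linearOrder (· + c) (fun _ _ h => add_le_add_left h c) (bot_add c)

theorem add_finset_sup [AddCommMonoid α] [LinearOrder α] [IsOrderedAddMonoid α]
    (s : Finset ι) (g : ι → WithBot α) (c : WithBot α) :
    c + s.sup g = s.sup fun j => c + g j := by
  simpa only [add_comm c] using finset_sup_add s g c

theorem map_finset_sup [LinearOrder α] [LinearOrder β] {φ : α → β} (hφ : Monotone φ)
    (s : Finset ι) (g : ι → WithBot α) :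
    (s.sup g).map φ = s.sup fun j => (g j).map φ :=
  apply_sup_eq_sup_comp_of_linearOrder (WithBot.map φ) hφ.withBot_map rfl

end WithBot

theorem empBellman_finset_sup_add_coe {X U ι : Type*} [Fintype U] {N : ℕ} (r : Fin N → ℝ)
    {γ : ℝ} (hγ : 0 ≤ γ) (xp : Fin N → X) (s : Finset ι) (f : ι → X × U → WithBot ℝ)
    (θ : ι → ℝ) (i : Fin N) :
    empBellman r γ xp (fun w => s.sup fun j => f j w + (θ j : WithBot ℝ)) i =
      s.sup fun j => empBellman r γ xp (f j) i + ((γ * θ j : ℝ) : WithBot ℝ) := by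
  have hmul : Monotone (γ * ·) := fun _ _ h => mul_le_mul_of_nonneg_left h hγ
  have hmap_add (a : WithBot ℝ) (t : ℝ) :
      (a + t).map (γ * ·) = a.map (γ * ·) + ((γ * t : ℝ) : WithBot ℝ) :=
    WithBot.map_add (AddMonoidHom.mulLeft γ) a t
  calc empBellman r γ xp (fun w => s.sup fun j => f j w + (θ j : WithBot ℝ)) i
    _ = r i + (s.sup fun j => (univ.sup fun u => f j (xp i, u)) + (θ j : WithBot ℝ)).map
          (γ * ·) := by
        rw [empBellman, Finset.sup_comm]
        simp only [WithBot.finset_sup_add]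
    _ = r i + s.sup fun j => (univ.sup fun u => f j (xp i, u)).map (γ * ·) + ↑(γ * θ j) := by
        simp only [WithBot.map_finset_sup hmul, hmap_add]
    _ = _ := by
        simp only [WithBot.add_finset_sup, empBellman, add_assoc]

theorem mp_empirical_bellman_general {X U : Type*} [Fintype U] {n p : ℕ}
    (γ : ℝ) (hγ : 0 < γ ∧ γ < 1)
    (z : Fin n → X × U) (xp : Fin n → X) (r : Fin n → ℝ)
    (f : Fin p → X × U → WithBot ℝ)
    (Fs Gs : Fin n → Fin p → WithBot ℝ)
    (hFs : ∀ i j, Fs i j = f j (z i))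
    (hGs : ∀ i j, Gs i j = empBellman r γ xp (f j) i)
    (θbar : Fin p → ℝ)
    (hθ : mpMulVec Fs (fun j => ((θbar j : ℝ) : WithBot ℝ)) =
          mpMulVec Gs (fun j => ((γ * θbar j : ℝ) : WithBot ℝ))) :
    ∀ i, (univ.sup fun j => f j (z i) + (θbar j : WithBot ℝ)) =
      empBellman r γ xp (fun w => univ.sup fun j => f j w + (θbar j : WithBot ℝ)) i := by
  intro i
  calc (univ.sup fun j => f j (z i) + (θbar j : WithBot ℝ))
    _ = mpMulVec Fs (fun j => (θbar j : WithBot ℝ)) i := by simp only [mpMulVec, hFs]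
    _ = mpMulVec Gs (fun j => ((γ * θbar j : ℝ) : WithBot ℝ)) i := congrFun hθ i
    _ = univ.sup fun j => empBellman r γ xp (f j) i + ((γ * θbar j : ℝ) : WithBot ℝ) := by
      simp only [mpMulVec, hGs]
    _ = _ := (empBellman_finset_sup_add_coe r hγ.1.le xp univ f θbar i).symm

/-- if `θ̄ ∈ ℝᵖ` solves the max-plus equation `Fₛ ⊠ θ = Gₛ ⊠ (γθ)`,
then the max-plus linear function `Q_θ̄` solves the empirical Bellman equation. -/
theorem mp_empirical_bellman {X U : Type*} [Fintype U] [Nonempty U] {n p : ℕ}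
    (γ : ℝ) (hγ : 0 < γ ∧ γ < 1)
    (z : Fin n → X × U) (xp : Fin n → X) (r : Fin n → ℝ)
    (f : Fin p → X × U → WithBot ℝ)
    (Fs Gs : Fin n → Fin p → WithBot ℝ)
    (hFs : ∀ i j, Fs i j = f j (z i))
    (hGs : ∀ i j, Gs i j = empBellman r γ xp (f j) i)
    (θbar : Fin p → ℝ)
    (hθ : mpMulVec Fs (fun j => ((θbar j : ℝ) : WithBot ℝ)) =
          mpMulVec Gs (fun j => ((γ * θbar j : ℝ) : WithBot ℝ))) :
    ∀ i, (univ.sup fun j => f j (z i) + (θbar j : WithBot ℝ)) =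
      empBellman r γ xp (fun w => univ.sup fun j => f j w + (θbar j : WithBot ℝ)) i :=
  mp_empirical_bellman_general γ hγ z xp r f Fs Gs hFs hGs θbar hθ
end

section
/- Under the assumption that $F_s \in \underline{\mathbb{R}}^{n\times p}$ is doubly $\mathbb{R}$-astic and $G_s \in \underline{\mathbb{R}}^{n\times p}$ is row $\mathbb{R}$-astic, the operator $\mathbf{D}: \mathbb{R}^p \to \mathbb{R}^p$ defined by $\mathbf{D}\theta = -\big[F_s^\top \boxtimes \big(-(G_s \boxtimes (\gamma\theta))\big)\big]$, with $\gamma \in (0,1)$, is a $\gamma$-contraction in the $\infty$-norm: $\|\mathbf{D}\theta_1 - \mathbf{D}\theta_2\|_\infty \le \gamma \|\theta_1 - \theta_2\|_\infty$ for all $\theta_1, \theta_2 \in \mathbb{R}^p$. -/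
open Finset

/-! A max-plus product commutes with adding a constant to every entry and is monotone, so it is
nonexpansive for the sup-norm on finite vectors; `D` composes two such products with the
isometry `θ ↦ -θ` and the scaling by `γ`. -/

theorem Finset.sup_add_coe_le_sup_add_coe_add {ι α : Type*} [AddCommGroup α] [LinearOrder α]
    [IsOrderedAddMonoid α] (s : Finset ι) (A : ι → WithBot α) {x y : ι → α} {c : α}
    (hxy : ∀ j, x j ≤ y j + c) :
    (s.sup fun j => A j + x j) ≤ (s.sup fun j => A j + y j) + c := by
  refine Finset.sup_le fun j hj => ?_
  calc A j + x j ≤ A j + ↑(y j + c) := add_le_add_right (WithBot.coe_le_coe.mpr (hxy j)) _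
    _ = (A j + y j) + c := by rw [WithBot.coe_add, add_assoc]
    _ ≤ (s.sup fun j => A j + y j) + c :=
        add_le_add_left (Finset.le_sup (f := fun j => A j + (y j : WithBot α)) hj) _

theorem le_add_of_coe_eq_mpMulVec {m n : ℕ} (A : Fin m → Fin n → WithBot ℝ)
    {x y : Fin n → ℝ} {r s : ℝ} {c : ℝ} {i : Fin m}
    (hr : (r : WithBot ℝ) = mpMulVec A (fun j => x j) i)
    (hs : (s : WithBot ℝ) = mpMulVec A (fun j => y j) i) (hxy : ∀ j, x j ≤ y j + c) :
    r ≤ s + c := by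
  have h : (r : WithBot ℝ) ≤ s + c := by
    rw [hr, hs]
    exact Finset.sup_add_coe_le_sup_add_coe_add _ (A i) hxy
  exact_mod_cast h

theorem norm_sub_le_of_coe_eq_mpMulVec {m n : ℕ} (A : Fin m → Fin n → WithBot ℝ)
    {x y : Fin n → ℝ} {r s : Fin m → ℝ}
    (hr : ∀ i, (r i : WithBot ℝ) = mpMulVec A (fun j => x j) i)
    (hs : ∀ i, (s i : WithBot ℝ) = mpMulVec A (fun j => y j) i) :
    ‖r - s‖ ≤ ‖x - y‖ := by
  have hxy : ∀ j, |x j - y j| ≤ ‖x - y‖ := fun j => by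
    simpa only [Pi.sub_apply, Real.norm_eq_abs] using norm_le_pi_norm (x - y) j
  refine (pi_norm_le_iff_of_nonneg (norm_nonneg _)).mpr fun i => ?_
  rw [Pi.sub_apply, Real.norm_eq_abs, abs_sub_le_iff]
  constructor
  · have := le_add_of_coe_eq_mpMulVec A (hr i) (hs i) fun j => by
      linarith [(abs_sub_le_iff.mp (hxy j)).1]
    linarith
  · have := le_add_of_coe_eq_mpMulVec A (hs i) (hr i) fun j => by
      linarith [(abs_sub_le_iff.mp (hxy j)).2]
    linarith

theorem mpfqi_operator_contraction_general {n p : ℕ}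
    (Fs Gs : Fin n → Fin p → WithBot ℝ)
    (γ : ℝ) (hγ0 : 0 < γ)
    (g : (Fin p → ℝ) → Fin n → ℝ)
    (hg : ∀ θ i, (g θ i : WithBot ℝ) =
          mpMulVec Gs (fun j => ((γ * θ j : ℝ) : WithBot ℝ)) i)
    (D : (Fin p → ℝ) → Fin p → ℝ)
    (hD : ∀ θ j, ((-(D θ j) : ℝ) : WithBot ℝ) =
          mpMulVec (fun j i => Fs i j) (fun i => ((-(g θ i) : ℝ) : WithBot ℝ)) j) :
    ∀ θ₁ θ₂ : Fin p → ℝ, ‖D θ₁ - D θ₂‖ ≤ γ * ‖θ₁ - θ₂‖ := by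
  intro θ₁ θ₂
  calc ‖D θ₁ - D θ₂‖ = ‖-D θ₁ - -D θ₂‖ := by rw [neg_sub_neg, norm_sub_rev]
    _ ≤ ‖-g θ₁ - -g θ₂‖ :=
        norm_sub_le_of_coe_eq_mpMulVec (r := -D θ₁) (x := -g θ₁) _ (hD θ₁) (hD θ₂)
    _ = ‖g θ₁ - g θ₂‖ := by rw [neg_sub_neg, norm_sub_rev]
    _ ≤ ‖γ • θ₁ - γ • θ₂‖ :=
        norm_sub_le_of_coe_eq_mpMulVec (x := γ • θ₁) (y := γ • θ₂) Gs (hg θ₁) (hg θ₂)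
    _ = γ * ‖θ₁ - θ₂‖ := by rw [← smul_sub, norm_smul, Real.norm_of_nonneg hγ0.le]

/-- with `Fₛ` doubly ℝ-astic, `Gₛ` row ℝ-astic and `γ ∈ (0,1)`, the
MP-FQI operator `Dθ = -(Fₛᵀ ⊠ (-(Gₛ ⊠ (γθ))))` is a `γ`-contraction in `∞`-norm. -/
theorem mpfqi_operator_contraction {n p : ℕ}
    (Fs Gs : Fin n → Fin p → WithBot ℝ)
    (hFrow : ∀ i, ∃ j, Fs i j ≠ ⊥) (hFcol : ∀ j, ∃ i, Fs i j ≠ ⊥)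
    (hGrow : ∀ i, ∃ j, Gs i j ≠ ⊥)
    (γ : ℝ) (hγ0 : 0 < γ) (hγ1 : γ < 1)
    (g : (Fin p → ℝ) → Fin n → ℝ)
    (hg : ∀ θ i, (g θ i : WithBot ℝ) =
          mpMulVec Gs (fun j => ((γ * θ j : ℝ) : WithBot ℝ)) i)
    (D : (Fin p → ℝ) → Fin p → ℝ)
    (hD : ∀ θ j, ((-(D θ j) : ℝ) : WithBot ℝ) =
          mpMulVec (fun j i => Fs i j) (fun i => ((-(g θ i) : ℝ) : WithBot ℝ)) j) :
    ∀ θ₁ θ₂ : Fin p → ℝ, ‖D θ₁ - D θ₂‖ ≤ γ * ‖θ₁ - θ₂‖ :=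
  mpfqi_operator_contraction_general Fs Gs γ hγ0 g hg D hD
end

section
/- Let $A \in \underline{\mathbb{R}}^{n \times p}$ be doubly $\mathbb{R}$-astic and $b \in \mathbb{R}^n$. Then the principal solution $\theta_{ps} = -(A^\top \boxtimes (-b))$ minimizes $\|A \boxtimes \theta - b\|_\infty$ over the constrained set $\{\theta : A \boxtimes \theta \le b\}$. -/
open Finset

/-! The principal solution is the greatest subsolution of `A ⊠ θ ≤ b` (residuation), so by
monotonicity of `⊠` every subsolution `v = A ⊠ θ` satisfies `v ≤ A ⊠ θps ≤ b`; coordinatewise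
`A ⊠ θps` is therefore at least as close to `b` as `v`. -/

theorem WithBot.add_coe_le_coe_iff {α : Type*} [AddCommGroup α] [LinearOrder α]
    [IsOrderedAddMonoid α] {x : WithBot α} {s t : α} :
    x + (s : WithBot α) ≤ t ↔ x ≤ ((t - s : α) : WithBot α) := by
  cases x with
  | bot => simp
  | coe a =>
    rw [← WithBot.coe_add, WithBot.coe_le_coe, WithBot.coe_le_coe, le_sub_iff_add_le]

lemma mpMulVec_le_iff {m n : ℕ} {A : Fin m → Fin n → WithBot ℝ} {v : Fin n → WithBot ℝ}
    {i : Fin m} {c : WithBot ℝ} : mpMulVec A v i ≤ c ↔ ∀ j, A i j + v j ≤ c := by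
  simp [mpMulVec, Finset.sup_le_iff]

lemma mpMulVec_monotone {m n : ℕ} (A : Fin m → Fin n → WithBot ℝ) : Monotone (mpMulVec A) :=
  fun _ _ h _ => Finset.sup_mono_fun fun j _ => add_le_add_right (h j) _

lemma le_coe_iff_forall_add_le {m : ℕ} {a : Fin m → WithBot ℝ} {b : Fin m → ℝ} {t : ℝ}
    (ht : ((-t : ℝ) : WithBot ℝ) = univ.sup fun i => a i + ((-b i : ℝ) : WithBot ℝ))
    (x : WithBot ℝ) : x ≤ t ↔ ∀ i, a i + x ≤ b i := by
  cases x with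
  | bot => simp
  | coe u =>
    calc (u : WithBot ℝ) ≤ t ↔ ((-t : ℝ) : WithBot ℝ) ≤ ((-u : ℝ) : WithBot ℝ) := by
          simp only [WithBot.coe_le_coe, neg_le_neg_iff]
      _ ↔ ∀ i, a i + u ≤ b i := by
          simp only [ht, Finset.sup_le_iff, Finset.mem_univ, true_implies,
            WithBot.add_coe_le_coe_iff, sub_neg_eq_add, neg_add_eq_sub]

theorem mpMulVec_le_iff_le_principal {m n : ℕ} {A : Fin m → Fin n → WithBot ℝ}
    {b : Fin m → ℝ} {θps : Fin n → ℝ}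
    (hps : ∀ j, ((-(θps j) : ℝ) : WithBot ℝ) =
      mpMulVec (fun j i => A i j) (fun i => ((-(b i) : ℝ) : WithBot ℝ)) j)
    (θ : Fin n → WithBot ℝ) : (∀ i, mpMulVec A θ i ≤ b i) ↔ ∀ j, θ j ≤ θps j := by
  simp only [mpMulVec_le_iff, le_coe_iff_forall_add_le (hps _)]
  exact forall_comm

lemma pi_norm_sub_le_of_le_of_le {ι : Type*} [Fintype ι] {f g b : ι → ℝ} (hgf : g ≤ f)
    (hfb : f ≤ b) : ‖f - b‖ ≤ ‖g - b‖ := by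
  refine (pi_norm_le_iff_of_nonneg (norm_nonneg _)).2 fun i => le_trans ?_ (norm_le_pi_norm _ i)
  simp only [Pi.sub_apply, Real.norm_eq_abs]
  rw [abs_of_nonpos (by linarith [hfb i]), abs_of_nonpos (by linarith [hgf i, hfb i])]
  linarith [hgf i]

theorem mp_constrained_regression_principal_solution_general {n p : ℕ}
    (A : Fin n → Fin p → WithBot ℝ)
    (b : Fin n → ℝ)
    (θps : Fin p → ℝ)
    (hps : ∀ j, ((-(θps j) : ℝ) : WithBot ℝ) =
          mpMulVec (fun j i => A i j) (fun i => ((-(b i) : ℝ) : WithBot ℝ)) j)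
    (Aps : Fin n → ℝ)
    (hAps : ∀ i, (Aps i : WithBot ℝ) =
          mpMulVec A (fun j => ((θps j : ℝ) : WithBot ℝ)) i) :
    (∀ i, (Aps i : WithBot ℝ) ≤ (b i : WithBot ℝ)) ∧
    ∀ (θ : Fin p → WithBot ℝ) (v : Fin n → ℝ),
      (∀ i, mpMulVec A θ i = (v i : WithBot ℝ)) →
      (∀ i, (v i : WithBot ℝ) ≤ (b i : WithBot ℝ)) →
      ‖Aps - b‖ ≤ ‖v - b‖ := by
  have hApsb : Aps ≤ b := fun i => by
    have := (mpMulVec_le_iff_le_principal hps _).2 (fun _ => le_rfl) i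
    exact_mod_cast (hAps i).trans_le this
  refine ⟨fun i => WithBot.coe_le_coe.2 (hApsb i), fun θ v hv hvb => ?_⟩
  have hθ : θ ≤ fun j => ((θps j : ℝ) : WithBot ℝ) :=
    (mpMulVec_le_iff_le_principal hps θ).1 fun i => (hv i).trans_le (hvb i)
  have hvAps : v ≤ Aps := fun i => by
    have := mpMulVec_monotone A hθ i
    rwa [hv, ← hAps, WithBot.coe_le_coe] at this
  exact pi_norm_sub_le_of_le_of_le hvAps hApsb

/-- for doubly ℝ-astic `A` and real `b`, the principal solution
`θps = -(Aᵀ ⊠ (-b))` minimizes `‖A ⊠ θ - b‖_∞` over the subsolution set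
`{θ : A ⊠ θ ≤ b}` (any subsolution with real-valued `A ⊠ θ = v` has error at least
that of `θps`). -/
theorem mp_constrained_regression_principal_solution {n p : ℕ}
    (A : Fin n → Fin p → WithBot ℝ)
    (hrow : ∀ i, ∃ j, A i j ≠ ⊥) (hcol : ∀ j, ∃ i, A i j ≠ ⊥)
    (b : Fin n → ℝ)
    (θps : Fin p → ℝ)
    (hps : ∀ j, ((-(θps j) : ℝ) : WithBot ℝ) =
          mpMulVec (fun j i => A i j) (fun i => ((-(b i) : ℝ) : WithBot ℝ)) j)
    (Aps : Fin n → ℝ)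
    (hAps : ∀ i, (Aps i : WithBot ℝ) =
          mpMulVec A (fun j => ((θps j : ℝ) : WithBot ℝ)) i) :
    (∀ i, (Aps i : WithBot ℝ) ≤ (b i : WithBot ℝ)) ∧
    ∀ (θ : Fin p → WithBot ℝ) (v : Fin n → ℝ),
      (∀ i, mpMulVec A θ i = (v i : WithBot ℝ)) →
      (∀ i, (v i : WithBot ℝ) ≤ (b i : WithBot ℝ)) →
      ‖Aps - b‖ ≤ ‖v - b‖ :=
  mp_constrained_regression_principal_solution_general A b θps hps Aps hAps
end

section
/- Suppose $F_s^H \in \underline{\mathbb{R}}^{q\times p}$ is doubly $\mathbb{R}$-astic and $G_s^H \in \underline{\mathbb{R}}^{q\times p}$ is row $\mathbb{R}$-astic, and $\gamma \in (0,1)$. Then the operator $\mathbf{D}^H: \mathbb{R}^p \to \mathbb{R}^p$ given by $\mathbf{D}^H\theta = -\big[(F_s^H)^\top \boxtimes \big(-(G_s^H \boxtimes (\gamma\theta))\big)\big]$ is a $\gamma$-contraction in the $\infty$-norm. -/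
open Finset

/-!
A max-plus matrix-vector product is monotone in the vector and commutes with adding a
constant, hence is nonexpansive in the sup-norm wherever its values are finite. Negation is
an isometry and `θ ↦ γθ` scales distances by `γ`, so `Dᴴ` is a composition of two
nonexpansive maps with a `γ`-Lipschitz one.
-/

lemma mpMulVec_coe_le_add {m n : ℕ} (A : Fin m → Fin n → WithBot ℝ) {v w : Fin n → ℝ} {c : ℝ}
    (h : ∀ j, v j ≤ w j + c) (i : Fin m) :
    mpMulVec A (fun j => (v j : WithBot ℝ)) i ≤
      mpMulVec A (fun j => (w j : WithBot ℝ)) i + (c : WithBot ℝ) := by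
  refine Finset.sup_le fun j _ => ?_
  calc A i j + (v j : WithBot ℝ) ≤ A i j + (w j : WithBot ℝ) + (c : WithBot ℝ) := by
        rw [add_assoc, ← WithBot.coe_add]
        exact add_le_add_right (WithBot.coe_le_coe.mpr (h j)) _
    _ ≤ mpMulVec A (fun j => (w j : WithBot ℝ)) i + (c : WithBot ℝ) :=
        add_le_add_left (Finset.le_sup (f := fun j => A i j + (w j : WithBot ℝ)) (mem_univ j)) _

lemma le_add_of_eq_mpMulVec {m n : ℕ} {A : Fin m → Fin n → WithBot ℝ}
    {v w : Fin n → ℝ} {x y : Fin m → ℝ} {c : ℝ}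
    (hx : ∀ i, (x i : WithBot ℝ) = mpMulVec A (fun j => (v j : WithBot ℝ)) i)
    (hy : ∀ i, (y i : WithBot ℝ) = mpMulVec A (fun j => (w j : WithBot ℝ)) i)
    (h : ∀ j, v j ≤ w j + c) (i : Fin m) :
    x i ≤ y i + c := by
  have := mpMulVec_coe_le_add A h i
  rwa [← hx, ← hy, ← WithBot.coe_add, WithBot.coe_le_coe] at this

lemma norm_sub_le_of_eq_mpMulVec {m n : ℕ} {A : Fin m → Fin n → WithBot ℝ}
    {v w : Fin n → ℝ} {x y : Fin m → ℝ}
    (hx : ∀ i, (x i : WithBot ℝ) = mpMulVec A (fun j => (v j : WithBot ℝ)) i)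
    (hy : ∀ i, (y i : WithBot ℝ) = mpMulVec A (fun j => (w j : WithBot ℝ)) i) :
    ‖x - y‖ ≤ ‖v - w‖ := by
  have hcoord : ∀ j, |v j - w j| ≤ ‖v - w‖ := fun j => by
    simpa only [Pi.sub_apply, Real.norm_eq_abs] using norm_le_pi_norm (v - w) j
  refine (pi_norm_le_iff_of_nonneg (norm_nonneg _)).mpr fun i => ?_
  have hxy := le_add_of_eq_mpMulVec hx hy
    (fun j => by linarith [le_abs_self (v j - w j), hcoord j]) i
  have hyx := le_add_of_eq_mpMulVec hy hx
    (fun j => by linarith [neg_abs_le (v j - w j), hcoord j]) i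
  rw [Pi.sub_apply, Real.norm_eq_abs, abs_sub_le_iff]
  constructor <;> linarith

theorem vmpfqi_operator_contraction_general {q p : ℕ}
    (FsH GsH : Fin q → Fin p → WithBot ℝ)
    (γ : ℝ) (hγ0 : 0 < γ)
    (g : (Fin p → ℝ) → Fin q → ℝ)
    (hg : ∀ θ k, (g θ k : WithBot ℝ) =
          mpMulVec GsH (fun j => ((γ * θ j : ℝ) : WithBot ℝ)) k)
    (D : (Fin p → ℝ) → Fin p → ℝ)
    (hD : ∀ θ j, ((-(D θ j) : ℝ) : WithBot ℝ) =
          mpMulVec (fun j k => FsH k j) (fun k => ((-(g θ k) : ℝ) : WithBot ℝ)) j) :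
    ∀ θ₁ θ₂ : Fin p → ℝ, ‖D θ₁ - D θ₂‖ ≤ γ * ‖θ₁ - θ₂‖ := by
  intro θ₁ θ₂
  have hDg : ‖-D θ₁ - -D θ₂‖ ≤ ‖-g θ₁ - -g θ₂‖ :=
    norm_sub_le_of_eq_mpMulVec (hD θ₁) (hD θ₂)
  have hgθ : ‖g θ₁ - g θ₂‖ ≤ ‖γ • θ₁ - γ • θ₂‖ :=
    norm_sub_le_of_eq_mpMulVec (hg θ₁) (hg θ₂)
  calc ‖D θ₁ - D θ₂‖ = ‖-D θ₁ - -D θ₂‖ := by rw [neg_sub_neg, norm_sub_rev]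
    _ ≤ ‖-g θ₁ - -g θ₂‖ := hDg
    _ = ‖g θ₁ - g θ₂‖ := by rw [neg_sub_neg, norm_sub_rev]
    _ ≤ ‖γ • θ₁ - γ • θ₂‖ := hgθ
    _ = γ * ‖θ₁ - θ₂‖ := by rw [← smul_sub, norm_smul, Real.norm_of_nonneg hγ0.le]

/-- with `Fₛᴴ ∈ underline ℝ^{q×p}` doubly ℝ-astic, `Gₛᴴ` row ℝ-astic and
`γ ∈ (0,1)`, the operator `Dᴴθ = -((Fₛᴴ)ᵀ ⊠ (-(Gₛᴴ ⊠ (γθ))))` is a `γ`-contraction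
in the `∞`-norm. -/
theorem vmpfqi_operator_contraction {q p : ℕ}
    (FsH GsH : Fin q → Fin p → WithBot ℝ)
    (hFrow : ∀ k, ∃ j, FsH k j ≠ ⊥) (hFcol : ∀ j, ∃ k, FsH k j ≠ ⊥)
    (hGrow : ∀ k, ∃ j, GsH k j ≠ ⊥)
    (γ : ℝ) (hγ0 : 0 < γ) (hγ1 : γ < 1)
    (g : (Fin p → ℝ) → Fin q → ℝ)
    (hg : ∀ θ k, (g θ k : WithBot ℝ) =
          mpMulVec GsH (fun j => ((γ * θ j : ℝ) : WithBot ℝ)) k)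
    (D : (Fin p → ℝ) → Fin p → ℝ)
    (hD : ∀ θ j, ((-(D θ j) : ℝ) : WithBot ℝ) =
          mpMulVec (fun j k => FsH k j) (fun k => ((-(g θ k) : ℝ) : WithBot ℝ)) j) :
    ∀ θ₁ θ₂ : Fin p → ℝ, ‖D θ₁ - D θ₂‖ ≤ γ * ‖θ₁ - θ₂‖ :=
  vmpfqi_operator_contraction_general FsH GsH γ hγ0 g hg D hD
end
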